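/- If F : D → D is a σ-semilinear endomorphism of D = Z_q^{2g} (Z_q = W(F_q)) that is p-autodual with respect to the standard symplectic form ω (i.e., there exists a σ^{−1}-semilinear V with FV = VF = p and ω(Fx,y) = σ(ω(x,Vy))), then the image F(D) contains pD, has index q^g in D, and F(D)/pD is a maximal isotropic subspace of the symplectic F_q-vector space D/pD. -/

import Mathlib

open WittVector

/-- The standard symplectic form on `R^{2g} = (Fin g ⊕ Fin g) → R`. -/
def stdForm (R : Type*) [CommRing R] (g : ℕ) (x y : (Fin g ⊕ Fin g) → R) : R :=
  ∑ i : Fin g, (x (Sum.inl i) * y (Sum.inr i) - x (Sum.inr i) * y (Sum.inl i))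

/-!
Write `ρ : D → D/pD = k^{2g}` for the reduction; as `k` is perfect, `ker ρ = pD`. Since
`FV = VF = p` and `p` is a nonzerodivisor on `D`, both maps are injective, `pD = F(VD) ⊆ F(D)`
and `ker (ρ ∘ V) = F(D)`. Hence `[D : F(D)] = |ρ(VD)|` and `|ρ(FD)| · [D : F(D)] = q^{2g}`.
Autoduality gives `ω(Fx, Fy) = p σ(ω(x, y))` and `ω(Vx, Vy) = p σ⁻¹(ω(x, y))`, so `ρ(FD)`
and `ρ(VD)` are isotropic for the nondegenerate form `ω mod p`, and each has at most `q^g`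
elements. The product formula then forces `[D : F(D)] = q^g`.
-/

namespace LinearMap.BilinForm

open Module

variable {K V : Type*} [Field K] [AddCommGroup V] [Module K V] {B : LinearMap.BilinForm K V}

theorem span_le_orthogonal_span {S : Set V} (hS : ∀ x ∈ S, ∀ y ∈ S, B x y = 0) :
    Submodule.span K S ≤ B.orthogonal (Submodule.span K S) :=
  Submodule.span_le.2 fun x hx _ hy =>
    (Submodule.span_le (p := LinearMap.ker (B.flip x)).2 (fun z hz => hS z hz x hx) hy :)

theorem two_mul_finrank_le_of_le_orthogonal [FiniteDimensional K V] (hB : B.Nondegenerate)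
    {W : Submodule K V} (hW : W ≤ B.orthogonal W) : 2 * finrank K W ≤ finrank K V := by
  have h₁ := Submodule.finrank_mono hW
  have h₂ := finrank_orthogonal hB W
  have h₃ := Submodule.finrank_le W
  omega

theorem natCard_sq_le_of_isotropic [Finite K] [FiniteDimensional K V] (hB : B.Nondegenerate)
    {S : Set V} (hS : ∀ x ∈ S, ∀ y ∈ S, B x y = 0) : Nat.card S ^ 2 ≤ Nat.card V := by
  have : Finite V := Module.finite_of_finite K
  set W := Submodule.span K S
  calc Nat.card S ^ 2 ≤ Nat.card W ^ 2 :=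
        Nat.pow_le_pow_left (Nat.card_mono (Set.toFinite _) Submodule.subset_span) 2
    _ = Nat.card K ^ (2 * finrank K W) := by rw [natCard_eq_pow_finrank (K := K), ← pow_mul']
    _ ≤ Nat.card K ^ finrank K V :=
        Nat.pow_le_pow_right Nat.card_pos
          (two_mul_finrank_le_of_le_orthogonal hB (span_le_orthogonal_span hS))
    _ = Nat.card V := (natCard_eq_pow_finrank (K := K)).symm

end LinearMap.BilinForm

section StdForm

variable {R S : Type*} [CommRing R] [CommRing S] {g : ℕ}

variable (R g) in
noncomputable def stdBilin : LinearMap.BilinForm R ((Fin g ⊕ Fin g) → R) :=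
  ∑ i : Fin g,
    ((LinearMap.mul R R).compl₁₂ (LinearMap.proj (Sum.inl i)) (LinearMap.proj (Sum.inr i)) -
      (LinearMap.mul R R).compl₁₂ (LinearMap.proj (Sum.inr i)) (LinearMap.proj (Sum.inl i)))

theorem stdBilin_apply (x y : (Fin g ⊕ Fin g) → R) : stdBilin R g x y = stdForm R g x y := by
  simp [stdBilin, stdForm]

theorem stdForm_nsmul_left (n : ℕ) (x y : (Fin g ⊕ Fin g) → R) :
    stdForm R g (n • x) y = n * stdForm R g x y := by
  rw [← stdBilin_apply, map_nsmul, LinearMap.smul_apply, stdBilin_apply, nsmul_eq_mul]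

theorem stdForm_nsmul_right (n : ℕ) (x y : (Fin g ⊕ Fin g) → R) :
    stdForm R g x (n • y) = n * stdForm R g x y := by
  rw [← stdBilin_apply, map_nsmul, stdBilin_apply, nsmul_eq_mul]

theorem RingHom.map_stdForm (f : R →+* S) (x y : (Fin g ⊕ Fin g) → R) :
    f (stdForm R g x y) = stdForm S g (f ∘ x) (f ∘ y) := by
  simp [stdForm]

theorem stdBilin_nondegenerate (K : Type*) [Field K] (g : ℕ) : (stdBilin K g).Nondegenerate := by
  have hAlt : (stdBilin K g).IsAlt := fun x => by simp [stdBilin_apply, stdForm, mul_comm]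
  refine (LinearMap.IsRefl.nondegenerate_iff_separatingLeft hAlt.isRefl).2 fun x hx => ?_
  funext i
  cases i with
  | inl i => simpa [stdBilin_apply, stdForm, Pi.single_apply] using hx (Pi.single (Sum.inr i) 1)
  | inr i => simpa [stdBilin_apply, stdForm, Pi.single_apply] using hx (Pi.single (Sum.inl i) 1)

variable {σ : R ≃+* R} {n : ℕ} {F V : ((Fin g ⊕ Fin g) → R) → ((Fin g ⊕ Fin g) → R)}

theorem stdForm_apply_apply_eq_mul_map (hVF : ∀ x, V (F x) = n • x)
    (hω : ∀ x y, stdForm R g (F x) y = σ (stdForm R g x (V y)))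
    (x y : (Fin g ⊕ Fin g) → R) :
    stdForm R g (F x) (F y) = n * σ (stdForm R g x y) := by
  rw [hω, hVF, stdForm_nsmul_right, map_mul, map_natCast]

theorem stdForm_apply_apply_eq_mul_map_symm (hFV : ∀ x, F (V x) = n • x)
    (hω : ∀ x y, stdForm R g (F x) y = σ (stdForm R g x (V y)))
    (x y : (Fin g ⊕ Fin g) → R) :
    stdForm R g (V x) (V y) = n * σ.symm (stdForm R g x y) := by
  apply σ.injective
  rw [← hω, hFV, stdForm_nsmul_left, map_mul, map_natCast, σ.apply_symm_apply]

end StdForm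

namespace WittVector

section CommRing

variable {p : ℕ} [Fact p.Prime] {k ι : Type*} [CommRing k]

variable (p ι) in
noncomputable def piConstantCoeff : (ι → WittVector p k) →+ (ι → k) :=
  (constantCoeff : WittVector p k →+* k).toAddMonoidHom.compLeft ι

theorem piConstantCoeff_apply (x : ι → WittVector p k) (i : ι) :
    piConstantCoeff p ι x i = (x i).coeff 0 :=
  rfl

theorem piConstantCoeff_surjective : Function.Surjective (piConstantCoeff p ι (k := k)) :=
  (constantCoeff_surjective p).comp_left

theorem stdBilin_piConstantCoeff_eq_zero [CharP k p] {g : ℕ}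
    {x y : (Fin g ⊕ Fin g) → WittVector p k} (h : ∃ c, stdForm _ g x y = p * c) :
    stdBilin k g (piConstantCoeff p _ x) (piConstantCoeff p _ y) = 0 := by
  obtain ⟨c, hc⟩ := h
  change stdBilin k g (constantCoeff ∘ x) (constantCoeff ∘ y) = 0
  rw [stdBilin_apply, ← RingHom.map_stdForm, hc, map_mul, map_natCast, CharP.cast_eq_zero,
    zero_mul]

variable [CharP k p] [PerfectRing k p]

theorem piConstantCoeff_eq_zero_iff {x : ι → WittVector p k} :
    piConstantCoeff p ι x = 0 ↔ ∃ y, p • y = x := by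
  simp only [funext_iff, Pi.smul_apply]
  simp only [piConstantCoeff_apply, Pi.zero_apply, ← mem_span_p_iff_coeff_zero_eq_zero,
    Ideal.mem_span_singleton', nsmul_eq_mul, mul_comm]
  exact Classical.skolem

theorem nsmul_p_injective : Function.Injective fun x : ι → WittVector p k => p • x := by
  intro x y hxy
  funext i
  rw [← sub_eq_zero]
  refine eq_zero_of_p_mul_eq_zero _ ?_
  rw [sub_mul, ← nsmul_eq_mul', ← nsmul_eq_mul']
  exact sub_eq_zero.2 (congrFun hxy i)

variable {F G : (ι → WittVector p k) →+ (ι → WittVector p k)}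

theorem injective_of_comp_eq_nsmul_p (hGF : ∀ x : ι → WittVector p k, G (F x) = p • x) :
    Function.Injective F :=
  fun x y h => nsmul_p_injective <| show p • x = p • y by rw [← hGF, ← hGF, h]

theorem ker_piConstantCoeff_le_range (hFG : ∀ x : ι → WittVector p k, F (G x) = p • x) :
    (piConstantCoeff p ι).ker ≤ F.range := by
  intro x hx
  obtain ⟨y, rfl⟩ := piConstantCoeff_eq_zero_iff.1 hx
  exact ⟨G y, hFG y⟩

theorem ker_piConstantCoeff_comp_eq_range (hFG : ∀ x : ι → WittVector p k, F (G x) = p • x)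
    (hGF : ∀ x : ι → WittVector p k, G (F x) = p • x) :
    ((piConstantCoeff p ι).comp F).ker = G.range := by
  ext x
  rw [AddMonoidHom.mem_ker, AddMonoidHom.comp_apply, piConstantCoeff_eq_zero_iff]
  constructor
  · rintro ⟨y, hy⟩
    exact ⟨y, injective_of_comp_eq_nsmul_p hGF (by rw [hFG, hy])⟩
  · rintro ⟨y, rfl⟩
    exact ⟨y, (hFG y).symm⟩

theorem index_range_eq_natCard_range (hFG : ∀ x : ι → WittVector p k, F (G x) = p • x)
    (hGF : ∀ x : ι → WittVector p k, G (F x) = p • x) :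
    G.range.index = Nat.card ((piConstantCoeff p ι).comp F).range := by
  rw [← ker_piConstantCoeff_comp_eq_range hFG hGF, AddSubgroup.index_ker]

theorem natCard_range_mul_index_range (hFG : ∀ x : ι → WittVector p k, F (G x) = p • x) :
    Nat.card ((piConstantCoeff p ι).comp F).range * F.range.index = Nat.card (ι → k) := by
  rw [← AddMonoidHom.map_range, ← AddSubgroup.relIndex_ker,
    AddSubgroup.relIndex_mul_index (ker_piConstantCoeff_le_range hFG), AddSubgroup.index_ker,
    AddMonoidHom.range_eq_top.2 piConstantCoeff_surjective,
    Nat.card_congr AddSubgroup.topEquiv.toEquiv]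

end CommRing

section Field

variable {p : ℕ} [Fact p.Prime] {k ι : Type*} [Field k] [Finite k] [Finite ι]
  {B : LinearMap.BilinForm k (ι → k)}

theorem natCard_range_piConstantCoeff_comp_sq_le (hB : B.Nondegenerate)
    {F : (ι → WittVector p k) →+ (ι → WittVector p k)}
    (hF : ∀ x y, B (piConstantCoeff p ι (F x)) (piConstantCoeff p ι (F y)) = 0) :
    Nat.card ((piConstantCoeff p ι).comp F).range ^ 2 ≤ Nat.card (ι → k) :=
  B.natCard_sq_le_of_isotropic hB <| by
    rintro _ ⟨x, rfl⟩ _ ⟨y, rfl⟩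
    exact hF x y

theorem index_range_sq_eq_natCard [CharP k p] [PerfectRing k p] (hB : B.Nondegenerate)
    {F G : (ι → WittVector p k) →+ (ι → WittVector p k)}
    (hFG : ∀ x, F (G x) = p • x) (hGF : ∀ x, G (F x) = p • x)
    (hF : ∀ x y, B (piConstantCoeff p ι (F x)) (piConstantCoeff p ι (F y)) = 0)
    (hG : ∀ x y, B (piConstantCoeff p ι (G x)) (piConstantCoeff p ι (G y)) = 0) :
    F.range.index ^ 2 = Nat.card (ι → k) := by
  have hprod := natCard_range_mul_index_range hFG
  rw [index_range_eq_natCard_range hGF hFG] at hprod ⊢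
  have hN : 0 < Nat.card (ι → k) := Nat.card_pos
  -- `a * b = N` together with `a ^ 2 ≤ N` and `b ^ 2 ≤ N` forces `b ^ 2 = N`
  nlinarith [natCard_range_piConstantCoeff_comp_sq_le hB hF,
    natCard_range_piConstantCoeff_comp_sq_le hB hG]

end Field

end WittVector

/-- If `F : D → D` is a `σ`-semilinear endomorphism of `D = Z_q^{2g}` (`Z_q = W(F_q)`, `σ` the
Witt vector Frobenius) which is `p`-autodual for the standard symplectic form `ω` (i.e. there
is a `σ⁻¹`-semilinear `V` with `FV = VF = p` and `ω(Fx,y) = σ(ω(x,Vy))`), then `F(D) ⊇ pD`,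
`F(D)` has index `q^g` in `D`, and `F(D)/pD` is isotropic — hence, having `F_q`-dimension `g`,
a maximal isotropic subspace of the symplectic `F_q`-vector space `D/pD`. -/
theorem stmt17 (p : ℕ) [hp : Fact p.Prime] (k : Type*) [Field k] [Fintype k] [CharP k p]
    [PerfectRing k p] (g : ℕ)
    (F : ((Fin g ⊕ Fin g) → WittVector p k) →ₛₗ[((frobeniusEquiv p k : WittVector p k ≃+* WittVector p k) : WittVector p k →+* WittVector p k)]
      ((Fin g ⊕ Fin g) → WittVector p k))
    (V : ((Fin g ⊕ Fin g) → WittVector p k) →ₛₗ[(((frobeniusEquiv p k).symm : WittVector p k ≃+* WittVector p k) : WittVector p k →+* WittVector p k)]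
      ((Fin g ⊕ Fin g) → WittVector p k))
    (hFV : ∀ x, F (V x) = p • x) (hVF : ∀ x, V (F x) = p • x)
    (hω : ∀ x y, stdForm (WittVector p k) g (F x) y =
      frobeniusEquiv p k (stdForm (WittVector p k) g x (V y))) :
    (∀ x, ∃ y, F y = p • x) ∧
    AddSubgroup.index (AddMonoidHom.range F.toAddMonoidHom) = Fintype.card k ^ g ∧
    (∀ x y, ∃ c : WittVector p k, stdForm (WittVector p k) g (F x) (F y) = p * c) := by
  have hFF := stdForm_apply_apply_eq_mul_map hVF hω
  have hVV := stdForm_apply_apply_eq_mul_map_symm hFV hω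
  refine ⟨fun x => ⟨V x, hFV x⟩, ?_, fun x y => ⟨_, hFF x y⟩⟩
  have hsq := index_range_sq_eq_natCard (stdBilin_nondegenerate k g)
    (F := F.toAddMonoidHom) (G := V.toAddMonoidHom) hFV hVF
    (fun x y => stdBilin_piConstantCoeff_eq_zero ⟨_, hFF x y⟩)
    (fun x y => stdBilin_piConstantCoeff_eq_zero ⟨_, hVV x y⟩)
  rw [Nat.card_fun, Nat.card_sum, Nat.card_fin, Nat.card_eq_fintype_card, ← two_mul, pow_mul']
    at hsq
  exact Nat.pow_left_injective two_ne_zero hsq
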